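/- arXiv:0812.2754 — 2 statements merged into one kernel-verified Lean document; each statement's English description precedes it below -/
import Mathlib

section
/- Let A be a real n×n matrix all of whose eigenvalues have positive real part. Then there exist constants 0 < γ ≤ β < ∞ and C₁, C₂ > 0 such that for all x ∈ ℝⁿ: if t ≥ 1 then C₁ t^γ ‖x‖ ≤ ‖t^A x‖ ≤ C₂ t^β ‖x‖, and if 0 < t ≤ 1 then C₁ t^β ‖x‖ ≤ ‖t^A x‖ ≤ C₂ t^γ ‖x‖. -/
open MeasureTheory Matrix Real Set Filter Topology

noncomputable section

/-- `t^A := exp((log t) • A)` for a real square matrix `A` and `t > 0`. -/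
def texp {n : ℕ} (A : Matrix (Fin n) (Fin n) ℝ) (t : ℝ) : Matrix (Fin n) (Fin n) ℝ :=
  NormedSpace.exp ((Real.log t) • A)

/-- Action of a matrix on Euclidean space. -/
def mApply {n : ℕ} (M : Matrix (Fin n) (Fin n) ℝ) (x : EuclideanSpace ℝ (Fin n)) :
    EuclideanSpace ℝ (Fin n) := WithLp.toLp 2 (M.mulVec x)

/-- `A ∈ M⁺(n,ℝ)`: every (complex) eigenvalue of `A` has positive real part. -/
def PosEigen {n : ℕ} (A : Matrix (Fin n) (Fin n) ℝ) : Prop :=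
  ∀ μ ∈ spectrum ℂ (A.map (Complex.ofReal)), 0 < μ.re

/-- The lattice point `ω ∈ ℤⁿ` viewed as a vector of `ℝⁿ`. -/
def latt {n : ℕ} (ω : Fin n → ℤ) : EuclideanSpace ℝ (Fin n) := WithLp.toLp 2 (fun i => (ω i : ℝ))

/-- `φ` is `A`-homogeneous: `φ(t^A x) = t·φ(x)` for all `t > 0` and all `x`. -/
def Homog {n : ℕ} (A : Matrix (Fin n) (Fin n) ℝ) (φ : EuclideanSpace ℝ (Fin n) → ℝ) : Prop :=
  ∀ t : ℝ, 0 < t → ∀ x : EuclideanSpace ℝ (Fin n), φ (mApply (texp A t) x) = t * φ x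

/-- Partial derivative in the `j`-th coordinate direction. -/
def pd {n : ℕ} (j : Fin n) (f : EuclideanSpace ℝ (Fin n) → ℝ)
    (x : EuclideanSpace ℝ (Fin n)) : ℝ :=
  fderiv ℝ f x (EuclideanSpace.single j 1)

/-- Membership in the decay space `S_σ^τ(ℝⁿ)`: `g` is continuous,
`|g(x)|(1+‖x‖^σ)` is bounded and `|ĝ(y)|(1+‖y‖^τ)` is bounded. -/
def SDecay {n : ℕ} (σ τ : ℝ) (g : EuclideanSpace ℝ (Fin n) → ℂ) : Prop :=
  Continuous g ∧ (∃ C : ℝ, ∀ x, ‖g x‖ * (1 + ‖x‖ ^ σ) ≤ C) ∧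
    (∃ C : ℝ, ∀ y, ‖FourierTransform.fourier g y‖ * (1 + ‖y‖ ^ τ) ≤ C)

/-- The theta function `Θ*_A(g, it) = Σ_{ω ∈ ℤⁿ \ {0}} g(t^A ω)`. -/
def thetaStar {n : ℕ} (A : Matrix (Fin n) (Fin n) ℝ) (g : EuclideanSpace ℝ (Fin n) → ℂ)
    (t : ℝ) : ℂ :=
  ∑' ω : {v : Fin n → ℤ // v ≠ 0}, g (mApply (texp A t) (latt ω.1))

section Aux


open Polynomial
open scoped Matrix.Norms.L2Operator NNReal ENNReal

variable {n : ℕ}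

lemma aux_norm_exp_le {𝔸 : Type*} [NormedRing 𝔸] [NormedAlgebra ℝ 𝔸] [CompleteSpace 𝔸]
    (h1 : ‖(1:𝔸)‖ ≤ 1) (X : 𝔸) : ‖NormedSpace.exp X‖ ≤ Real.exp ‖X‖ := by
  rw [NormedSpace.exp_eq_tsum ℝ]
  refine (norm_tsum_le_tsum_norm (NormedSpace.norm_expSeries_summable' X)).trans ?_
  rw [Real.exp_eq_exp_ℝ, NormedSpace.exp_eq_tsum_div]
  refine Summable.tsum_le_tsum (fun k => ?_) (NormedSpace.norm_expSeries_summable' X) ?_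
  · rw [norm_smul, norm_inv, Real.norm_natCast, div_eq_inv_mul ((‖X‖:ℝ)^k)]
    refine mul_le_mul_of_nonneg_left ?_ (by positivity)
    rcases Nat.eq_zero_or_pos k with rfl | hk
    · simpa using h1
    · exact norm_pow_le' X hk
  · simpa [div_eq_inv_mul] using Real.summable_pow_div_factorial ‖X‖

lemma aux_norm_one_le : ‖(1 : Matrix (Fin n) (Fin n) ℝ)‖ ≤ 1 := by
  rw [Matrix.cstar_norm_def, _root_.map_one]
  exact ContinuousLinearMap.norm_id_le

lemma aux_mApply_norm_le (M : Matrix (Fin n) (Fin n) ℝ) (x : EuclideanSpace ℝ (Fin n)) :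
    ‖mApply M x‖ ≤ ‖M‖ * ‖x‖ := M.l2_opNorm_mulVec x

lemma aux_exp_eigen (M : Matrix (Fin n) (Fin n) ℂ) (μ : ℂ) (v : Fin n → ℂ)
    (hMv : M.mulVec v = μ • v) :
    (NormedSpace.exp M).mulVec v = Complex.exp μ • v := by
  have hpow : ∀ k : ℕ, (M ^ k).mulVec v = μ ^ k • v := by
    intro k
    induction k with
    | zero => simp [Matrix.one_mulVec]
    | succ k ih =>
      rw [pow_succ, ← Matrix.mulVec_mulVec, hMv, Matrix.mulVec_smul, ih, smul_smul, pow_succ]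
      ring_nf
  let L : Matrix (Fin n) (Fin n) ℂ →ₗ[ℂ] (Fin n → ℂ) :=
    { toFun := fun N => N.mulVec v
      map_add' := fun N₁ N₂ => Matrix.add_mulVec N₁ N₂ v
      map_smul' := fun c N => (Matrix.smul_mulVec c N v) }
  have hsum : Summable fun k : ℕ => ((k.factorial : ℂ))⁻¹ • M ^ k :=
    NormedSpace.expSeries_summable' M
  have hs2 : Summable fun k : ℕ => ((k.factorial : ℂ))⁻¹ * μ ^ k := by
    simpa [smul_eq_mul] using NormedSpace.expSeries_summable' (𝕂 := ℂ) μ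
  calc (NormedSpace.exp M).mulVec v
      = L.toContinuousLinearMap (∑' k : ℕ, ((k.factorial : ℂ))⁻¹ • M ^ k) := by
        rw [NormedSpace.exp_eq_tsum ℂ]; rfl
    _ = ∑' k : ℕ, L.toContinuousLinearMap (((k.factorial : ℂ))⁻¹ • M ^ k) :=
        L.toContinuousLinearMap.map_tsum hsum
    _ = ∑' k : ℕ, (((k.factorial : ℂ))⁻¹ * μ ^ k) • v := by
        refine tsum_congr fun k => ?_
        show (((k.factorial : ℂ))⁻¹ • M ^ k).mulVec v = _
        rw [Matrix.smul_mulVec, hpow, smul_smul]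
    _ = (∑' k : ℕ, ((k.factorial : ℂ))⁻¹ * μ ^ k) • v := Summable.tsum_smul_const hs2 v
    _ = Complex.exp μ • v := by
        rw [Complex.exp_eq_exp_ℂ, NormedSpace.exp_eq_tsum ℂ]
        simp [smul_eq_mul]

lemma aux_exp_poly (M : Matrix (Fin n) (Fin n) ℂ) :
    ∃ p : ℂ[X], aeval M p = NormedSpace.exp M := by
  have hsum : Summable fun k : ℕ => ((k.factorial : ℂ))⁻¹ • M ^ k :=
    NormedSpace.expSeries_summable' M
  have hcl : IsClosed ((Subalgebra.toSubmodule (aeval (R := ℂ) M).range : Submodule ℂ _) :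
      Set (Matrix (Fin n) (Fin n) ℂ)) := Submodule.closed_of_finiteDimensional _
  have hmem : NormedSpace.exp M ∈ Subalgebra.toSubmodule (aeval (R := ℂ) M).range := by
    rw [NormedSpace.exp_eq_tsum ℂ]
    refine hcl.mem_of_tendsto hsum.hasSum.tendsto_sum_nat
      (Filter.Eventually.of_forall fun N => ?_)
    refine Submodule.sum_mem _ fun k _ => Submodule.smul_mem _ _ ?_
    exact ⟨X ^ k, by simp⟩
  exact ⟨hmem.choose, hmem.choose_spec⟩

lemma aux_eigenvector (M : Matrix (Fin n) (Fin n) ℂ) (μ : ℂ) (hμ : μ ∈ spectrum ℂ M) :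
    ∃ v : Fin n → ℂ, v ≠ 0 ∧ M.mulVec v = μ • v := by
  have hμ' : μ ∈ spectrum ℂ (Matrix.toLinAlgEquiv' M) := by
    rwa [AlgEquiv.spectrum_eq]
  have he : Module.End.HasEigenvalue (Matrix.toLinAlgEquiv' M) μ :=
    Module.End.hasEigenvalue_iff_mem_spectrum.mpr hμ'
  obtain ⟨v, hv⟩ := he.exists_hasEigenvector
  refine ⟨v, hv.2, ?_⟩
  have := hv.apply_eq_smul
  simpa [Matrix.toLinAlgEquiv'_apply, Matrix.toLin'_apply] using this

lemma aux_poly_eigen (M : Matrix (Fin n) (Fin n) ℂ) (p : ℂ[X]) (μ : ℂ) (v : Fin n → ℂ)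
    (hv0 : v ≠ 0) (hMv : M.mulVec v = μ • v) :
    (aeval M p).mulVec v = p.eval μ • v := by
  have hev : Module.End.HasEigenvector (Matrix.toLinAlgEquiv' M) μ v := by
    constructor
    · rw [Module.End.mem_eigenspace_iff]
      simpa [Matrix.toLinAlgEquiv'_apply, Matrix.toLin'_apply] using hMv
    · exact hv0
  have h1 := Module.End.aeval_apply_of_hasEigenvector (p := p) hev
  have h2 : aeval (Matrix.toLinAlgEquiv' M) p = Matrix.toLinAlgEquiv' (aeval M p) :=
    aeval_algHom_apply (Matrix.toLinAlgEquiv'.toAlgHom (R := ℂ)) M p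
  rw [h2] at h1
  simpa [Matrix.toLinAlgEquiv'_apply, Matrix.toLin'_apply] using h1

lemma aux_spectrum_exp (hn : 0 < n) (M : Matrix (Fin n) (Fin n) ℂ) :
    ∀ z ∈ spectrum ℂ (NormedSpace.exp M), ∃ μ ∈ spectrum ℂ M, z = Complex.exp μ := by
  haveI : Nonempty (Fin n) := Fin.pos_iff_nonempty.mp hn
  obtain ⟨p, hp⟩ := aux_exp_poly M
  have hspec : spectrum ℂ (NormedSpace.exp M) = (fun k => p.eval k) '' spectrum ℂ M := by
    rw [← hp]
    exact spectrum.map_polynomial_aeval_of_nonempty M p (spectrum.nonempty M)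
  intro z hz
  rw [hspec] at hz
  obtain ⟨μ, hμ, rfl⟩ := hz
  refine ⟨μ, hμ, ?_⟩
  obtain ⟨v, hv0, hMv⟩ := aux_eigenvector M μ hμ
  have h1 : (aeval M p).mulVec v = p.eval μ • v := aux_poly_eigen M p μ v hv0 hMv
  have h2 : (NormedSpace.exp M).mulVec v = Complex.exp μ • v := aux_exp_eigen M μ v hMv
  rw [hp] at h1
  have h3 : p.eval μ • v = Complex.exp μ • v := h1.symm.trans h2
  exact smul_left_injective ℂ hv0 h3

lemma aux_radius_lt (hn : 0 < n) (A : Matrix (Fin n) (Fin n) ℝ) (hA : PosEigen A) :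
    spectralRadius ℂ (NormedSpace.exp (-(A.map Complex.ofReal))) < 1 := by
  haveI : Nonempty (Fin n) := Fin.pos_iff_nonempty.mp hn
  have h1 : ∀ z ∈ spectrum ℂ (NormedSpace.exp (-(A.map Complex.ofReal))), ‖z‖₊ < 1 := by
    intro z hz
    obtain ⟨μ, hμ, rfl⟩ := aux_spectrum_exp hn _ z hz
    have hμ' : -μ ∈ spectrum ℂ (A.map Complex.ofReal) := by
      rw [← spectrum.neg_eq] at hμ
      simpa using hμ
    have hre : μ.re < 0 := by
      have := hA _ hμ'
      simp at this
      linarith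
    have : ‖Complex.exp μ‖ < 1 := by
      rw [Complex.norm_exp]
      exact Real.exp_lt_one_iff.mpr hre
    exact_mod_cast this
  have := spectrum.spectralRadius_lt_of_forall_lt
    (NormedSpace.exp (-(A.map Complex.ofReal))) (r := 1) h1
  simpa using this

lemma aux_pow_decay_complex (E : Matrix (Fin n) (Fin n) ℂ) (hρ : spectralRadius ℂ E < 1) :
    ∃ r C : ℝ, 0 < r ∧ r < 1 ∧ 1 ≤ C ∧ ∀ k : ℕ, ‖E ^ k‖ ≤ C * r ^ k := by
  obtain ⟨r, hr1, hr2⟩ := ENNReal.lt_iff_exists_nnreal_btwn.mp hρ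
  have hrpos : (0 : ℝ≥0∞) < r := lt_of_le_of_lt zero_le hr1
  have hrpos' : (0 : ℝ) < r := by exact_mod_cast hrpos
  have hrlt : (r : ℝ) < 1 := by exact_mod_cast hr2
  have hgel := spectrum.pow_nnnorm_pow_one_div_tendsto_nhds_spectralRadius E
  have hev : ∀ᶠ k : ℕ in atTop, ((‖E ^ k‖₊ : ℝ≥0∞)) ^ (1 / (k : ℝ)) < (r : ℝ≥0∞) :=
    hgel.eventually_lt_const hr1
  obtain ⟨N, hN⟩ := (hev.and (eventually_ge_atTop 1)).exists_forall_of_atTop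
  have key : ∀ k : ℕ, k ≥ N → ‖E ^ k‖ ≤ (r : ℝ) ^ k := by
    intro k hk
    obtain ⟨h1, h2⟩ := hN k hk
    have hk0 : (k : ℝ) ≠ 0 := Nat.cast_ne_zero.mpr (by omega)
    have h3 := ENNReal.rpow_lt_rpow h1 (by positivity : (0:ℝ) < (k : ℝ))
    rw [← ENNReal.rpow_mul, one_div, inv_mul_cancel₀ hk0, ENNReal.rpow_one,
      ENNReal.rpow_natCast, ← ENNReal.coe_pow, ENNReal.coe_lt_coe] at h3
    have h4 : ‖E ^ k‖ ≤ ((r ^ k : ℝ≥0) : ℝ) := by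
      exact_mod_cast le_of_lt h3
    simpa using h4
  obtain ⟨S, hS⟩ : ∃ S : ℝ, S = ∑ k ∈ Finset.range N, ‖E ^ k‖ / (r : ℝ) ^ k := ⟨_, rfl⟩
  have hsumnn : (0:ℝ) ≤ S := hS ▸ Finset.sum_nonneg fun k _ => by positivity
  have hC1 : (1:ℝ) ≤ 1 + S := by linarith
  refine ⟨r, 1 + S, hrpos', hrlt, hC1, fun k => ?_⟩
  rcases lt_or_ge k N with hkN | hkN
  · have hle : ‖E ^ k‖ / (r : ℝ) ^ k ≤ ∑ j ∈ Finset.range N, ‖E ^ j‖ / (r : ℝ) ^ j :=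
      Finset.single_le_sum (f := fun j => ‖E ^ j‖ / (r : ℝ) ^ j)
        (fun j _ => by positivity) (Finset.mem_range.mpr hkN)
    have hrk : (0:ℝ) < (r : ℝ) ^ k := by positivity
    calc ‖E ^ k‖ = (‖E ^ k‖ / (r : ℝ) ^ k) * (r : ℝ) ^ k := by field_simp
      _ ≤ (1 + S) * (r : ℝ) ^ k := by
          refine mul_le_mul_of_nonneg_right ?_ hrk.le
          rw [hS]; linarith [hS ▸ hle]
  · calc ‖E ^ k‖ ≤ (r : ℝ) ^ k := key k hkN
      _ ≤ (1 + S) * (r : ℝ) ^ k := by nlinarith [pow_pos hrpos' k, hsumnn]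

lemma aux_map_exp (X : Matrix (Fin n) (Fin n) ℝ) :
    (NormedSpace.exp X).map Complex.ofReal = NormedSpace.exp (X.map Complex.ofReal) := by
  have hcont : Continuous fun M : Matrix (Fin n) (Fin n) ℝ =>
      (Complex.ofRealHom.mapMatrix (m := Fin n)) M := by
    simp only [RingHom.mapMatrix_apply]
    exact continuous_id.matrix_map Complex.continuous_ofReal
  have h := open scoped Matrix.Norms.Operator in NormedSpace.map_exp (Complex.ofRealHom.mapMatrix (m := Fin n)) hcont X
  simp only [RingHom.mapMatrix_apply] at h
  rw [show (Complex.ofRealHom : ℝ → ℂ) = Complex.ofReal from rfl] at h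
  exact h

lemma aux_norm_map_le (R : Matrix (Fin n) (Fin n) ℝ) : ‖R‖ ≤ ‖R.map Complex.ofReal‖ := by
  rw [Matrix.l2_opNorm_def]
  refine ContinuousLinearMap.opNorm_le_bound _ (norm_nonneg _) fun x => ?_
  set y : EuclideanSpace ℂ (Fin n) := WithLp.toLp 2 (fun i => ((x i : ℝ) : ℂ)) with hy
  have hny : ‖y‖ = ‖x‖ := by
    rw [EuclideanSpace.norm_eq, EuclideanSpace.norm_eq]
    congr 1
    refine Finset.sum_congr rfl fun i _ => ?_
    simp [hy]
  have happ : ((R.map Complex.ofReal).mulVec y) = fun i => ((R.mulVec x i : ℝ) : ℂ) := by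
    funext i
    have := RingHom.map_mulVec Complex.ofRealHom R x i
    exact this.symm
  have hnapp : ‖(show EuclideanSpace ℂ (Fin n) from WithLp.toLp 2 ((R.map Complex.ofReal).mulVec y))‖
      = ‖(show EuclideanSpace ℝ (Fin n) from WithLp.toLp 2 (R.mulVec x))‖ := by
    rw [EuclideanSpace.norm_eq, EuclideanSpace.norm_eq]
    congr 1
    refine Finset.sum_congr rfl fun i _ => ?_
    show ‖((R.map Complex.ofReal).mulVec y) i‖ ^ 2 = ‖(R.mulVec x) i‖ ^ 2
    rw [congrFun happ i]
    simp
  calc ‖(toEuclideanLin.trans LinearMap.toContinuousLinearMap) R x‖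
      = ‖(show EuclideanSpace ℂ (Fin n) from WithLp.toLp 2 ((R.map Complex.ofReal).mulVec y))‖ := by
        rw [hnapp]; rfl
    _ ≤ ‖R.map Complex.ofReal‖ * ‖y‖ := (R.map Complex.ofReal).l2_opNorm_mulVec y
    _ = ‖R.map Complex.ofReal‖ * ‖x‖ := by rw [hny]

lemma aux_pow_decay_real (hn : 0 < n) (A : Matrix (Fin n) (Fin n) ℝ) (hA : PosEigen A) :
    ∃ r C : ℝ, 0 < r ∧ r < 1 ∧ 1 ≤ C ∧
      ∀ k : ℕ, ‖(NormedSpace.exp (-A)) ^ k‖ ≤ C * r ^ k := by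
  obtain ⟨r, C, hr0, hr1, hC, hpow⟩ :=
    aux_pow_decay_complex (NormedSpace.exp (-(A.map Complex.ofReal)))
      (aux_radius_lt hn A hA)
  refine ⟨r, C, hr0, hr1, hC, fun k => ?_⟩
  have hmap : ((NormedSpace.exp (-A)) ^ k).map Complex.ofReal
      = (NormedSpace.exp (-(A.map Complex.ofReal))) ^ k := by
    have h1 : ((NormedSpace.exp (-A)) ^ k).map Complex.ofReal
        = ((NormedSpace.exp (-A)).map Complex.ofReal) ^ k := by
      have := map_pow (Complex.ofRealHom.mapMatrix (m := Fin n)) (NormedSpace.exp (-A)) k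
      exact this
    rw [h1, aux_map_exp]
    have : (-A).map Complex.ofReal = -(A.map Complex.ofReal) := by
      ext i j
      simp [Matrix.map_apply, Matrix.neg_apply]
    rw [this]
  calc ‖(NormedSpace.exp (-A)) ^ k‖
      ≤ ‖((NormedSpace.exp (-A)) ^ k).map Complex.ofReal‖ := aux_norm_map_le _
    _ = ‖(NormedSpace.exp (-(A.map Complex.ofReal))) ^ k‖ := by rw [hmap]
    _ ≤ C * r ^ k := hpow k

lemma aux_exp_smul_norm_le (A : Matrix (Fin n) (Fin n) ℝ) (s : ℝ) :
    ‖NormedSpace.exp (s • A)‖ ≤ Real.exp (|s| * ‖A‖) := by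
  refine (aux_norm_exp_le aux_norm_one_le (s • A)).trans ?_
  rw [norm_smul, Real.norm_eq_abs]

lemma aux_decay_real (hn : 0 < n) (A : Matrix (Fin n) (Fin n) ℝ) (hA : PosEigen A) :
    ∃ γ C : ℝ, 0 < γ ∧ 1 ≤ C ∧
      ∀ s : ℝ, 0 ≤ s → ‖NormedSpace.exp ((-s) • A)‖ ≤ C * Real.exp (-(γ * s)) := by
  obtain ⟨r, C, hr0, hr1, hC, hpow⟩ := aux_pow_decay_real hn A hA
  have hlog : Real.log r < 0 := Real.log_neg hr0 hr1
  set γ : ℝ := -Real.log r with hγdef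
  have hγ : 0 < γ := by simp [hγdef]; linarith
  refine ⟨γ, Real.exp ‖A‖ * C * Real.exp γ, hγ, ?_, ?_⟩
  · have h1 : (1:ℝ) ≤ Real.exp ‖A‖ := Real.one_le_exp (norm_nonneg A)
    have h2 : (1:ℝ) ≤ Real.exp γ := Real.one_le_exp hγ.le
    have h3 : (1:ℝ) ≤ Real.exp ‖A‖ * C := by nlinarith
    nlinarith
  · intro s hs
    set k : ℕ := ⌊s⌋₊ with hk
    have hk1 : (k : ℝ) ≤ s := Nat.floor_le hs
    have hk2 : s < (k : ℝ) + 1 := Nat.lt_floor_add_one s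
    have hsplit : ((-s) • A : Matrix (Fin n) (Fin n) ℝ)
        = (-(s - (k:ℝ))) • A + (-(k:ℝ)) • A := by
      rw [← add_smul]; congr 1; ring
    have hcomm : Commute ((-(s - (k:ℝ))) • A) ((-(k:ℝ)) • A) :=
      ((Commute.refl A).smul_left _).smul_right _
    have hnk : ((-(k:ℝ)) • A : Matrix (Fin n) (Fin n) ℝ) = (k : ℕ) • (-A) := by
      rw [← Nat.cast_smul_eq_nsmul ℝ k (-A), smul_neg, neg_smul]
    have hmuleq : NormedSpace.exp ((-s) • A)
        = NormedSpace.exp ((-(s - (k:ℝ))) • A) * (NormedSpace.exp (-A)) ^ k := by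
      rw [hsplit, Matrix.exp_add_of_commute _ _ hcomm, hnk, Matrix.exp_nsmul]
    have hb1 : ‖NormedSpace.exp ((-(s - (k:ℝ))) • A)‖ ≤ Real.exp ‖A‖ := by
      refine (aux_exp_smul_norm_le A _).trans ?_
      refine Real.exp_le_exp.mpr ?_
      have habs : |(-(s - (k:ℝ)))| ≤ 1 := by
        rw [abs_neg, abs_of_nonneg (by linarith)]
        linarith
      nlinarith [norm_nonneg A, abs_nonneg (-(s - (k:ℝ)))]
    have hb2 : ‖(NormedSpace.exp (-A)) ^ k‖ ≤ C * Real.exp (γ - γ * s) := by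
      refine (hpow k).trans ?_
      refine mul_le_mul_of_nonneg_left ?_ (by linarith)
      have hrk : (r : ℝ) ^ k = Real.exp ((k : ℝ) * Real.log r) := by
        rw [Real.exp_nat_mul, Real.exp_log hr0]
      rw [hrk]
      refine Real.exp_le_exp.mpr ?_
      have hks : s - 1 ≤ (k:ℝ) := by linarith
      have := mul_le_mul_of_nonpos_right hks hlog.le
      calc (k:ℝ) * Real.log r ≤ (s - 1) * Real.log r := by nlinarith
        _ = γ - γ * s := by rw [hγdef]; ring
    calc ‖NormedSpace.exp ((-s) • A)‖
        ≤ ‖NormedSpace.exp ((-(s - (k:ℝ))) • A)‖ * ‖(NormedSpace.exp (-A)) ^ k‖ := by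
          rw [hmuleq]; exact norm_mul_le _ _
      _ ≤ Real.exp ‖A‖ * (C * Real.exp (γ - γ * s)) := by
          refine mul_le_mul hb1 hb2 (norm_nonneg _) (Real.exp_nonneg _)
      _ = Real.exp ‖A‖ * C * Real.exp γ * Real.exp (-(γ * s)) := by
          rw [show γ - γ * s = γ + (-(γ * s)) by ring, Real.exp_add]; ring

end Aux

section Main
open scoped Matrix.Norms.L2Operator

/-- two-sided power bounds for `‖t^A x‖`. -/
theorem texp_norm_bounds {n : ℕ} (A : Matrix (Fin n) (Fin n) ℝ) (hA : PosEigen A) :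
    ∃ γ β C₁ C₂ : ℝ, 0 < γ ∧ γ ≤ β ∧ 0 < C₁ ∧ 0 < C₂ ∧
      ∀ (x : EuclideanSpace ℝ (Fin n)) (t : ℝ),
        (1 ≤ t → C₁ * t ^ γ * ‖x‖ ≤ ‖mApply (texp A t) x‖ ∧
          ‖mApply (texp A t) x‖ ≤ C₂ * t ^ β * ‖x‖) ∧
        (0 < t → t ≤ 1 → C₁ * t ^ β * ‖x‖ ≤ ‖mApply (texp A t) x‖ ∧
          ‖mApply (texp A t) x‖ ≤ C₂ * t ^ γ * ‖x‖) := by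
  rcases Nat.eq_zero_or_pos n with hn | hn
  · subst hn
    refine ⟨1, 1, 1, 1, one_pos, le_refl 1, one_pos, one_pos, fun x t => ?_⟩
    haveI : Subsingleton (EuclideanSpace ℝ (Fin 0)) := ⟨fun a b => by ext i; exact i.elim0⟩
    have hx : ‖x‖ = 0 := by rw [Subsingleton.elim x 0, norm_zero]
    have hy : ∀ M : Matrix (Fin 0) (Fin 0) ℝ, ‖mApply M x‖ = 0 := fun M => by
      rw [Subsingleton.elim (mApply M x) 0, norm_zero]
    constructor
    · intro ht
      constructor <;> simp [hx, hy]
    · intro ht0 ht1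
      constructor <;> simp [hx, hy]
  · obtain ⟨γ, C, hγ, hC, hdn⟩ := aux_decay_real hn A hA
    have hC0 : (0:ℝ) < C := lt_of_lt_of_le one_pos hC
    set β : ℝ := max γ ‖A‖ with hβ
    have hγβ : γ ≤ β := le_max_left _ _
    have hup : ∀ s : ℝ, 0 ≤ s → ‖NormedSpace.exp (s • A)‖ ≤ C * Real.exp (β * s) := by
      intro s hs
      refine (aux_exp_smul_norm_le A s).trans ?_
      have h1 : |s| * ‖A‖ ≤ β * s := by
        rw [abs_of_nonneg hs, mul_comm]
        exact mul_le_mul_of_nonneg_right (le_max_right _ _) hs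
      calc Real.exp (|s| * ‖A‖) ≤ Real.exp (β * s) := Real.exp_le_exp.mpr h1
        _ ≤ C * Real.exp (β * s) := le_mul_of_one_le_left (Real.exp_nonneg _) hC
    have hinv : ∀ t : ℝ, 0 < t → (texp A t⁻¹) * (texp A t) = 1 := by
      intro t ht
      show NormedSpace.exp ((Real.log t⁻¹) • A) * NormedSpace.exp ((Real.log t) • A) = 1
      rw [Real.log_inv,
        ← Matrix.exp_add_of_commute _ _ (((Commute.refl A).smul_left _).smul_right _),
        ← add_smul, neg_add_cancel, zero_smul, NormedSpace.exp_zero]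
    have hrec : ∀ (t : ℝ), 0 < t → ∀ x : EuclideanSpace ℝ (Fin n),
        ‖x‖ ≤ ‖texp A t⁻¹‖ * ‖mApply (texp A t) x‖ := by
      intro t ht x
      have hxe : x = mApply (texp A t⁻¹) (mApply (texp A t) x) := by
        show x = WithLp.toLp 2 ((texp A t⁻¹).mulVec ((texp A t).mulVec x))
        rw [Matrix.mulVec_mulVec, hinv t ht, Matrix.one_mulVec]
      calc ‖x‖ = ‖mApply (texp A t⁻¹) (mApply (texp A t) x)‖ := by rw [← hxe]
        _ ≤ _ := aux_mApply_norm_le _ _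
    refine ⟨γ, β, C⁻¹, C, hγ, hγβ, inv_pos.mpr hC0, hC0, fun x t => ?_⟩
    constructor
    · intro ht
      have ht0 : (0:ℝ) < t := lt_of_lt_of_le one_pos ht
      have hs : 0 ≤ Real.log t := Real.log_nonneg ht
      have htexp : texp A t = NormedSpace.exp ((Real.log t) • A) := rfl
      have htexpinv : texp A t⁻¹ = NormedSpace.exp ((-Real.log t) • A) := by
        show NormedSpace.exp ((Real.log t⁻¹) • A) = _
        rw [Real.log_inv]
      constructor
      · have h1 : ‖texp A t⁻¹‖ ≤ C * Real.exp (-(γ * Real.log t)) := by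
          rw [htexpinv]; exact hdn _ hs
        have h2 : ‖x‖ ≤ C * Real.exp (-(γ * Real.log t)) * ‖mApply (texp A t) x‖ :=
          (hrec t ht0 x).trans (mul_le_mul_of_nonneg_right h1 (norm_nonneg _))
        have he : t ^ γ = Real.exp (γ * Real.log t) := by
          rw [Real.rpow_def_of_pos ht0, mul_comm]
        rw [he, Real.exp_neg] at *
        calc C⁻¹ * Real.exp (γ * Real.log t) * ‖x‖
            ≤ C⁻¹ * Real.exp (γ * Real.log t) *
              (C * (Real.exp (γ * Real.log t))⁻¹ * ‖mApply (texp A t) x‖) :=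
              mul_le_mul_of_nonneg_left h2 (by positivity)
          _ = ‖mApply (texp A t) x‖ := by
              field_simp
      · have h1 : ‖texp A t‖ ≤ C * Real.exp (β * Real.log t) := by
          rw [htexp]; exact hup _ hs
        have he : t ^ β = Real.exp (β * Real.log t) := by
          rw [Real.rpow_def_of_pos ht0, mul_comm]
        calc ‖mApply (texp A t) x‖ ≤ ‖texp A t‖ * ‖x‖ := aux_mApply_norm_le _ _
          _ ≤ C * Real.exp (β * Real.log t) * ‖x‖ :=
              mul_le_mul_of_nonneg_right h1 (norm_nonneg _)
          _ = C * t ^ β * ‖x‖ := by rw [he]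
    · intro ht0 ht1
      have hs : Real.log t ≤ 0 := Real.log_nonpos ht0.le ht1
      have hu : 0 ≤ -Real.log t := by linarith
      have htexp2 : texp A t = NormedSpace.exp ((-(-Real.log t)) • A) := by
        show NormedSpace.exp ((Real.log t) • A) = _
        rw [neg_neg]
      have htexpinv : texp A t⁻¹ = NormedSpace.exp ((-Real.log t) • A) := by
        show NormedSpace.exp ((Real.log t⁻¹) • A) = _
        rw [Real.log_inv]
      constructor
      · have h1 : ‖texp A t⁻¹‖ ≤ C * Real.exp (β * (-Real.log t)) := by
          rw [htexpinv]; exact hup _ hu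
        have h2 : ‖x‖ ≤ C * Real.exp (β * (-Real.log t)) * ‖mApply (texp A t) x‖ :=
          (hrec t ht0 x).trans (mul_le_mul_of_nonneg_right h1 (norm_nonneg _))
        have he : t ^ β = Real.exp (β * Real.log t) := by
          rw [Real.rpow_def_of_pos ht0, mul_comm]
        rw [he]
        have h3 : Real.exp (β * (-Real.log t)) = (Real.exp (β * Real.log t))⁻¹ := by
          rw [← Real.exp_neg]; congr 1; ring
        rw [h3] at h2
        calc C⁻¹ * Real.exp (β * Real.log t) * ‖x‖
            ≤ C⁻¹ * Real.exp (β * Real.log t) *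
              (C * (Real.exp (β * Real.log t))⁻¹ * ‖mApply (texp A t) x‖) :=
              mul_le_mul_of_nonneg_left h2 (by positivity)
          _ = ‖mApply (texp A t) x‖ := by field_simp
      · have h1 : ‖texp A t‖ ≤ C * Real.exp (-(γ * -Real.log t)) := by
          rw [htexp2]; exact hdn _ hu
        have he : C * Real.exp (-(γ * -Real.log t)) = C * t ^ γ := by
          rw [Real.rpow_def_of_pos ht0]
          congr 1
          congr 1
          ring
        calc ‖mApply (texp A t) x‖ ≤ ‖texp A t‖ * ‖x‖ := aux_mApply_norm_le _ _
          _ ≤ C * Real.exp (-(γ * -Real.log t)) * ‖x‖ :=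
              mul_le_mul_of_nonneg_right h1 (norm_nonneg _)
          _ = C * t ^ γ * ‖x‖ := by rw [he]

end Main
end
end

section
/- Let A ∈ M⁺(n,ℝ) with Ljapunov matrix L and let S_L = {x ∈ ℝⁿ : ⟨Lx, x⟩ = 1}. Then the map S_L × (0,∞) → ℝⁿ \ {0} given by (x̄, t) ↦ t^A x̄ is a diffeomorphism. -/
open MeasureTheory Matrix Real Set Filter Topology

noncomputable section

open scoped ContDiff

section Aux

variable {n : ℕ}

local notation "V" => EuclideanSpace ℝ (Fin n)

/-- multiplication by a matrix as a CLM on Euclidean space -/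
def toCLM (M : Matrix (Fin n) (Fin n) ℝ) : V →L[ℝ] V :=
  Matrix.toEuclideanCLM (𝕜 := ℝ) M

lemma toCLM_apply (M : Matrix (Fin n) (Fin n) ℝ) (x : V) :
    toCLM M x = WithLp.toLp 2 (M.mulVec x) := rfl

lemma mApply_eq_toCLM (M : Matrix (Fin n) (Fin n) ℝ) (x : V) :
    mApply M x = toCLM M x := rfl

/-- the matrix ↔ CLM linear equivalence -/
def eqL : Matrix (Fin n) (Fin n) ℝ ≃ₗ[ℝ] (V →L[ℝ] V) :=
  Matrix.toEuclideanLin.trans LinearMap.toContinuousLinearMap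

lemma eqL_eq_toCLM (M : Matrix (Fin n) (Fin n) ℝ) : eqL M = toCLM M := rfl

lemma continuous_symmCLM :
    Continuous (⇑(Matrix.toEuclideanCLM (𝕜 := ℝ) (n := Fin n)).symm) := by
  have h : ⇑(Matrix.toEuclideanCLM (𝕜 := ℝ) (n := Fin n)).symm = ⇑(eqL (n := n)).symm := by
    funext T
    apply (eqL (n := n)).injective
    rw [eqL_eq_toCLM]
    show Matrix.toEuclideanCLM (𝕜 := ℝ) ((Matrix.toEuclideanCLM (𝕜 := ℝ)).symm T)
      = eqL ((eqL (n := n)).symm T)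
    rw [(eqL (n := n)).apply_symm_apply, StarAlgEquiv.apply_symm_apply]
  rw [h, ← LinearEquiv.coe_toContinuousLinearEquiv_symm' (eqL (n := n))]
  exact (eqL (n := n)).toContinuousLinearEquiv.symm.continuous

lemma commute_smul_smul (X : V →L[ℝ] V) (s u : ℝ) : Commute (s • X) (u • X) := by
  show _ * _ = _ * _
  ext x
  simp only [ContinuousLinearMap.mul_apply, ContinuousLinearMap.smul_apply, _root_.map_smul]
  rw [smul_comm s u (X (X x))]

lemma commute_smul_self (X : V →L[ℝ] V) (s : ℝ) : Commute (s • X) X := by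
  show _ * _ = _ * _
  ext x
  simp only [ContinuousLinearMap.mul_apply, ContinuousLinearMap.smul_apply, _root_.map_smul]

variable (A : Matrix (Fin n) (Fin n) ℝ)

/-- The one-parameter group `s ↦ exp (s A)` as CLMs on Euclidean space. -/
def Ecl (s : ℝ) : V →L[ℝ] V := NormedSpace.exp (s • toCLM A)

lemma toCLM_texp (t : ℝ) : toCLM (texp A t) = Ecl A (Real.log t) := by
  letI : SeminormedRing (Matrix (Fin n) (Fin n) ℝ) := Matrix.linftyOpSemiNormedRing
  letI : NormedRing (Matrix (Fin n) (Fin n) ℝ) := Matrix.linftyOpNormedRing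
  letI : NormedAlgebra ℝ (Matrix (Fin n) (Fin n) ℝ) := Matrix.linftyOpNormedAlgebra
  letI : NormedAlgebra ℚ (V →L[ℝ] V) := NormedAlgebra.restrictScalars ℚ ℝ _
  have h := NormedSpace.map_exp (Matrix.toEuclideanCLM (𝕜 := ℝ) (n := Fin n)).symm
    (by exact continuous_symmCLM) (Real.log t • toCLM A)
  have h2 : (Matrix.toEuclideanCLM (𝕜 := ℝ) (n := Fin n)).symm (Real.log t • toCLM A)
      = Real.log t • A := by
    rw [_root_.map_smul]
    show Real.log t • (Matrix.toEuclideanCLM (𝕜 := ℝ)).symm (Matrix.toEuclideanCLM (𝕜 := ℝ) A)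
      = Real.log t • A
    rw [StarAlgEquiv.symm_apply_apply]
  rw [h2] at h
  have h3 : texp A t = (Matrix.toEuclideanCLM (𝕜 := ℝ) (n := Fin n)).symm (Ecl A (Real.log t)) := by
    exact h.symm
  show Matrix.toEuclideanCLM (𝕜 := ℝ) (texp A t) = Ecl A (Real.log t)
  rw [h3, StarAlgEquiv.apply_symm_apply]

lemma texp_mApply (t : ℝ) (x : V) : mApply (texp A t) x = Ecl A (Real.log t) x := by
  rw [mApply_eq_toCLM, toCLM_texp]

lemma hasDerivAt_Ecl (s : ℝ) :
    HasDerivAt (Ecl A) (Ecl A s * toCLM A) s :=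
  hasDerivAt_exp_smul_const (𝕂 := ℝ) (toCLM A) s

lemma contDiff_Ecl : ContDiff ℝ ∞ (Ecl A) := by
  rw [contDiff_infty]
  intro m
  induction m with
  | zero =>
    exact contDiff_zero.2 (continuous_iff_continuousAt.2 (fun s => (hasDerivAt_Ecl A s).continuousAt))
  | succ m ih =>
    have h : ContDiff ℝ ((m : WithTop ℕ∞) + 1) (Ecl A) := by
      rw [contDiff_succ_iff_deriv]
      refine ⟨fun s => (hasDerivAt_Ecl A s).differentiableAt, by simp, ?_⟩
      have hd : deriv (Ecl A) = fun s => (Ecl A s).comp (toCLM A) := by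
        funext s; exact (hasDerivAt_Ecl A s).deriv
      rw [hd]
      exact ih.clm_comp contDiff_const
    exact_mod_cast h

lemma Ecl_add (s u : ℝ) : Ecl A (s + u) = Ecl A s * Ecl A u := by
  unfold Ecl
  have h : (s + u) • toCLM A = s • toCLM A + u • toCLM A := add_smul s u (toCLM A)
  rw [h]
  letI : NormedAlgebra ℚ (V →L[ℝ] V) := NormedAlgebra.restrictScalars ℚ ℝ _
  exact NormedSpace.exp_add_of_commute (commute_smul_smul (toCLM A) s u)

lemma Ecl_zero : Ecl A 0 = 1 := by
  unfold Ecl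
  have h : (0 : ℝ) • toCLM A = 0 := zero_smul ℝ (toCLM A)
  rw [h, NormedSpace.exp_zero]

lemma Ecl_cancel (s : ℝ) (x : V) : Ecl A (-s) (Ecl A s x) = x := by
  have h : Ecl A (-s + s) x = x := by rw [neg_add_cancel, Ecl_zero]; rfl
  rw [Ecl_add, ContinuousLinearMap.mul_apply] at h
  exact h

lemma Ecl_ne_zero (s : ℝ) {x : V} (hx : x ≠ 0) : Ecl A s x ≠ 0 := by
  intro h
  apply hx
  have h2 := Ecl_cancel A s x
  rw [h] at h2
  simpa using h2.symm

lemma Ecl_comm_toCLM (s : ℝ) : Ecl A s * toCLM A = toCLM A * Ecl A s :=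
  ((commute_smul_self (toCLM A) s).exp_left).eq

end Aux

section Geom

variable {n : ℕ}

local notation "V" => EuclideanSpace ℝ (Fin n)

lemma inner_eq_dot (x y : V) :
    (inner ℝ x y : ℝ) = dotProduct (WithLp.equiv 2 (Fin n → ℝ) x) (WithLp.equiv 2 (Fin n → ℝ) y) := by
  simp [PiLp.inner_apply, dotProduct, RCLike.inner_apply, mul_comm]

lemma toCLM_apply' (M : Matrix (Fin n) (Fin n) ℝ) (x : V) :
    WithLp.equiv 2 (Fin n → ℝ) (toCLM M x) = M *ᵥ (WithLp.equiv 2 (Fin n → ℝ) x) := rfl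

lemma symm_inner {L : Matrix (Fin n) (Fin n) ℝ} (hL : L.IsHermitian) (v w : V) :
    (inner ℝ (toCLM L v) w : ℝ) = inner ℝ v (toCLM L w) := by
  have hsym : Lᵀ = L := hL
  rw [inner_eq_dot, inner_eq_dot, toCLM_apply', toCLM_apply']
  set v' := WithLp.equiv 2 (Fin n → ℝ) v
  set w' := WithLp.equiv 2 (Fin n → ℝ) w
  calc (L *ᵥ v') ⬝ᵥ w' = w' ⬝ᵥ (L *ᵥ v') := dotProduct_comm _ _
    _ = (w' ᵥ* L) ⬝ᵥ v' := Matrix.dotProduct_mulVec _ _ _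
    _ = (Lᵀ *ᵥ w') ⬝ᵥ v' := by rw [Matrix.mulVec_transpose]
    _ = (L *ᵥ w') ⬝ᵥ v' := by rw [hsym]
    _ = v' ⬝ᵥ (L *ᵥ w') := dotProduct_comm _ _

lemma equiv_ne_zero {z : V} (hz : z ≠ 0) : WithLp.equiv 2 (Fin n → ℝ) z ≠ 0 := by
  intro h
  apply hz
  ext i
  exact congrFun h i

lemma pos_inner {L : Matrix (Fin n) (Fin n) ℝ} (hL : L.PosDef) {z : V} (hz : z ≠ 0) :
    0 < (inner ℝ (toCLM L z) z : ℝ) := by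
  have h := hL.dotProduct_mulVec_pos (x := WithLp.equiv 2 (Fin n → ℝ) z) (equiv_ne_zero hz)
  rw [inner_eq_dot, toCLM_apply']
  simpa [dotProduct_comm] using h

variable (A L : Matrix (Fin n) (Fin n) ℝ)

/-- the flow `t ↦ t^A y` -/
def cmap (y : V) (t : ℝ) : V := Ecl A (Real.log t) y

/-- the quadratic form along the flow -/
def Q (y : V) (t : ℝ) : ℝ := inner ℝ (toCLM L (cmap A y t)) (cmap A y t)

lemma cmap_one (y : V) : cmap A y 1 = y := by
  unfold cmap
  rw [Real.log_one, Ecl_zero]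
  rfl

lemma cmap_ne_zero {y : V} (hy : y ≠ 0) (t : ℝ) : cmap A y t ≠ 0 :=
  Ecl_ne_zero A _ hy

lemma Q_pos {y : V} (hL : L.PosDef) (hy : y ≠ 0) (t : ℝ) : 0 < Q A L y t :=
  pos_inner hL (cmap_ne_zero A hy t)

lemma mApply_texp_eq_cmap (y : V) (t : ℝ) : mApply (texp A t) y = cmap A y t :=
  texp_mApply A t y

lemma hasDerivAt_cmap (y : V) {s : ℝ} (hs : 0 < s) :
    HasDerivAt (cmap A y) (s⁻¹ • toCLM A (cmap A y s)) s := by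
  have h1 : HasDerivAt (fun u : ℝ => Ecl A u y) ((Ecl A (Real.log s) * toCLM A) y)
      (Real.log s) :=
    ((ContinuousLinearMap.apply ℝ V y).hasFDerivAt).comp_hasDerivAt _ (hasDerivAt_Ecl A _)
  have h2 : HasDerivAt Real.log s⁻¹ s := Real.hasDerivAt_log hs.ne'
  have h3 := h1.scomp s h2
  have h4 : (Ecl A (Real.log s) * toCLM A) y = toCLM A (cmap A y s) := by
    rw [Ecl_comm_toCLM]
    rfl
  rw [h4] at h3
  exact h3

lemma hasDerivAt_Q (hL : L.PosDef) (y : V) {s : ℝ} (hs : 0 < s) :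
    HasDerivAt (Q A L y)
      (2 * s⁻¹ * inner ℝ (toCLM A (cmap A y s)) (toCLM L (cmap A y s))) s := by
  have hc := hasDerivAt_cmap A y hs
  have hLc : HasDerivAt (fun t => toCLM L (cmap A y t))
      (toCLM L (s⁻¹ • toCLM A (cmap A y s))) s :=
    ((toCLM L).hasFDerivAt).comp_hasDerivAt s hc
  have h := hLc.inner ℝ hc
  refine h.congr_deriv ?_
  set c := cmap A y s
  rw [real_inner_smul_right, _root_.map_smul, real_inner_smul_left,
    symm_inner hL.isHermitian (toCLM A c) c,
    real_inner_comm (toCLM L c) (toCLM A c)]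
  ring

lemma Q_strictMonoOn (hL : L.PosDef)
    (hLyap : ∀ x : V, x ≠ 0 → 0 < (inner ℝ (mApply A x) (mApply L x) : ℝ))
    {y : V} (hy : y ≠ 0) : StrictMonoOn (Q A L y) (Ioi 0) := by
  apply strictMonoOn_of_deriv_pos (convex_Ioi 0)
  · intro s hs
    exact ((hasDerivAt_Q A L hL y hs).continuousAt).continuousWithinAt
  · intro s hs
    rw [interior_Ioi] at hs
    rw [(hasDerivAt_Q A L hL y hs).deriv]
    have hpos := hLyap (cmap A y s) (cmap_ne_zero A hy s)
    rw [mApply_eq_toCLM, mApply_eq_toCLM] at hpos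
    have hs' : (0:ℝ) < s := hs
    have h2 : 0 < 2 * s⁻¹ := mul_pos (by norm_num) (inv_pos.2 hs')
    exact mul_pos h2 hpos

end Geom

section Exist

variable {n : ℕ}

local notation "V" => EuclideanSpace ℝ (Fin n)

variable (A L : Matrix (Fin n) (Fin n) ℝ)

lemma exists_kappa (hL : L.PosDef)
    (hLyap : ∀ x : V, x ≠ 0 → 0 < (inner ℝ (mApply A x) (mApply L x) : ℝ))
    {y₀ : V} (hy₀ : y₀ ≠ 0) :
    ∃ κ : ℝ, 0 < κ ∧ ∀ z : V, z ≠ 0 →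
      κ * (inner ℝ (toCLM L z) z : ℝ) ≤ 2 * (inner ℝ (toCLM A z) (toCLM L z) : ℝ) := by
  haveI : Nontrivial (EuclideanSpace ℝ (Fin n)) := ⟨⟨y₀, 0, hy₀⟩⟩
  set g : V → ℝ :=
    fun z => 2 * (inner ℝ (toCLM A z) (toCLM L z) : ℝ) / (inner ℝ (toCLM L z) z : ℝ) with hg
  have hcont : ContinuousOn g (Metric.sphere (0:V) 1) := by
    apply ContinuousOn.div
    · exact (continuous_const.mul ((toCLM A).continuous.inner (toCLM L).continuous)).continuousOn
    · exact ((toCLM L).continuous.inner continuous_id).continuousOn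
    · intro z hz
      have hzne : z ≠ 0 := by
        intro h; rw [h] at hz; simp at hz
      exact (pos_inner hL hzne).ne'
  obtain ⟨z₀, hz₀, hmin⟩ := (isCompact_sphere (0:V) 1).exists_isMinOn
    (NormedSpace.sphere_nonempty.2 zero_le_one) hcont
  have hz₀ne : z₀ ≠ 0 := by
    intro h; rw [h] at hz₀; simp at hz₀
  refine ⟨g z₀, ?_, ?_⟩
  · apply div_pos
    · have h := hLyap z₀ hz₀ne
      rw [mApply_eq_toCLM, mApply_eq_toCLM] at h
      linarith
    · exact pos_inner hL hz₀ne
  · intro z hz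
    set c : ℝ := ‖z‖⁻¹ with hc
    have hcpos : 0 < c := inv_pos.2 (norm_pos_iff.2 hz)
    have hw : c • z ∈ Metric.sphere (0:V) 1 := by
      simp only [mem_sphere_iff_norm, sub_zero, norm_smul, hc, norm_inv, norm_norm]
      rw [inv_mul_cancel₀ (norm_ne_zero_iff.2 hz)]
    have hgw : g (c • z) = g z := by
      simp only [hg, _root_.map_smul, real_inner_smul_left, real_inner_smul_right]
      rw [show 2 * (c * (c * (inner ℝ (toCLM A z) (toCLM L z) : ℝ)))
          = (c * c) * (2 * (inner ℝ (toCLM A z) (toCLM L z) : ℝ)) by ring,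
        show c * (c * (inner ℝ (toCLM L z) z : ℝ)) = (c * c) * (inner ℝ (toCLM L z) z : ℝ) by ring,
        mul_div_mul_left _ _ (by positivity : c * c ≠ 0)]
    have hle : g z₀ ≤ g z := by
      rw [← hgw]
      exact isMinOn_iff.1 hmin _ hw
    rw [hg] at hle
    exact (le_div_iff₀ (pos_inner hL hz)).1 hle

lemma exists_root (hL : L.PosDef)
    (hLyap : ∀ x : V, x ≠ 0 → 0 < (inner ℝ (mApply A x) (mApply L x) : ℝ))
    {y : V} (hy : y ≠ 0) : ∃ s, s ∈ Ioi (0:ℝ) ∧ Q A L y s = 1 := by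
  obtain ⟨κ, hκ, hb⟩ := exists_kappa A L hL hLyap hy
  set u : ℝ → ℝ := fun t => Real.log (Q A L y t) - κ * Real.log t with hu
  have hder : ∀ s : ℝ, 0 < s → HasDerivAt u
      ((2 * s⁻¹ * inner ℝ (toCLM A (cmap A y s)) (toCLM L (cmap A y s))) / Q A L y s
        - κ * s⁻¹) s := by
    intro s hs
    exact ((hasDerivAt_Q A L hL y hs).log (Q_pos A L hL hy s).ne').sub
      ((Real.hasDerivAt_log hs.ne').const_mul κ)
  have hmono : MonotoneOn u (Ioi 0) := by
    apply monotoneOn_of_deriv_nonneg (convex_Ioi 0)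
    · intro s hs
      exact ((hder s hs).continuousAt).continuousWithinAt
    · intro s hs
      rw [interior_Ioi] at hs
      exact ((hder s hs).differentiableAt).differentiableWithinAt
    · intro s hs
      rw [interior_Ioi] at hs
      have hs' : (0:ℝ) < s := hs
      rw [(hder s hs').deriv]
      set c := cmap A y s
      have hY : 0 < (inner ℝ (toCLM L c) c : ℝ) := pos_inner hL (cmap_ne_zero A hy s)
      have hXY := hb c (cmap_ne_zero A hy s)
      have hQc : Q A L y s = inner ℝ (toCLM L c) c := rfl
      rw [hQc, sub_nonneg, le_div_iff₀ hY]
      have hsinv : (0:ℝ) ≤ s⁻¹ := (inv_pos.2 hs').le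
      calc κ * s⁻¹ * (inner ℝ (toCLM L c) c : ℝ)
          = s⁻¹ * (κ * (inner ℝ (toCLM L c) c : ℝ)) := by ring
        _ ≤ s⁻¹ * (2 * (inner ℝ (toCLM A c) (toCLM L c) : ℝ)) :=
            mul_le_mul_of_nonneg_left hXY hsinv
        _ = 2 * s⁻¹ * (inner ℝ (toCLM A c) (toCLM L c) : ℝ) := by ring
  set Q1 := Q A L y 1 with hQ1def
  have hQ1 : 0 < Q1 := Q_pos A L hL hy 1
  set b := (1 + |Real.log Q1|) / κ with hbdef
  have hbpos : 0 ≤ b := div_nonneg (by positivity) hκ.le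
  set T := Real.exp b with hTdef
  set t₀ := Real.exp (-b) with ht₀def
  have hT1 : 1 ≤ T := Real.one_le_exp hbpos
  have ht₀pos : 0 < t₀ := Real.exp_pos _
  have ht₀1 : t₀ ≤ 1 := Real.exp_le_one_iff.2 (neg_nonpos.2 hbpos)
  have hTpos : 0 < T := Real.exp_pos _
  have hκb : κ * b = 1 + |Real.log Q1| := by
    rw [hbdef]; field_simp
  have h2 : u 1 ≤ u T := hmono (mem_Ioi.2 one_pos) (mem_Ioi.2 hTpos) hT1
  have h1 : u t₀ ≤ u 1 := hmono (mem_Ioi.2 ht₀pos) (mem_Ioi.2 one_pos) ht₀1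
  have hu1 : u 1 = Real.log Q1 := by simp [hu, hQ1def]
  have hQT : 1 ≤ Q A L y T := by
    have hlogT : Real.log T = b := Real.log_exp b
    have h3 : Real.log Q1 ≤ Real.log (Q A L y T) - κ * b := by
      rw [← hlogT, ← hu1]; exact h2
    have habs := neg_abs_le (Real.log Q1)
    by_contra hcon
    push_neg at hcon
    have h4 := Real.log_nonpos (Q_pos A L hL hy T).le hcon.le
    rw [hκb] at h3
    linarith
  have hQt₀ : Q A L y t₀ ≤ 1 := by
    have hlogt₀ : Real.log t₀ = -b := Real.log_exp _
    have h3 : Real.log (Q A L y t₀) - κ * (-b) ≤ Real.log Q1 := by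
      rw [← hlogt₀, ← hu1]; exact h1
    have habs := le_abs_self (Real.log Q1)
    by_contra hcon
    push_neg at hcon
    have h4 := Real.log_nonneg hcon.le
    rw [mul_neg, hκb] at h3
    linarith
  have hcont : ContinuousOn (Q A L y) (Icc t₀ T) := by
    intro s hs
    have hs' : 0 < s := lt_of_lt_of_le ht₀pos hs.1
    exact ((hasDerivAt_Q A L hL y hs').continuousAt).continuousWithinAt
  have hsub := intermediate_value_Icc (le_trans ht₀1 hT1) hcont
  obtain ⟨s, hs, hQs⟩ := hsub ⟨hQt₀, hQT⟩
  exact ⟨s, lt_of_lt_of_le ht₀pos hs.1, hQs⟩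

end Exist

section IFT

variable {n : ℕ}

local notation "V" => EuclideanSpace ℝ (Fin n)

variable (A L : Matrix (Fin n) (Fin n) ℝ)

/-- the quadratic form as a function of both variables -/
def Fq : V × ℝ → ℝ := fun p => Q A L p.1 p.2

lemma contDiffAt_cflow {p : V × ℝ} (hp : p.2 ≠ 0) :
    ContDiffAt ℝ ∞ (fun q : V × ℝ => Ecl A (Real.log q.2) q.1) p := by
  have h1 : ContDiffAt ℝ ∞ (fun q : V × ℝ => Ecl A (Real.log q.2)) p :=
    (contDiff_Ecl A).contDiffAt.comp p ((Real.contDiffAt_log.2 hp).comp p contDiffAt_snd)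
  exact h1.clm_apply contDiffAt_fst

lemma contDiffAt_Fq {p : V × ℝ} (hp : p.2 ≠ 0) : ContDiffAt ℝ ∞ (Fq A L) p := by
  have hc := contDiffAt_cflow A hp
  have hLc : ContDiffAt ℝ ∞ (fun q : V × ℝ => toCLM L (Ecl A (Real.log q.2) q.1)) p :=
    ((toCLM L).contDiff.contDiffAt).comp p hc
  exact hLc.inner ℝ hc

open Classical in
/-- the radial coordinate -/
def sig : V → ℝ := fun y =>
  if h : ∃ s, s ∈ Ioi (0:ℝ) ∧ Q A L y s = 1 then h.choose else 1

lemma sig_spec (hL : L.PosDef)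
    (hLyap : ∀ x : V, x ≠ 0 → 0 < (inner ℝ (mApply A x) (mApply L x) : ℝ))
    {y : V} (hy : y ≠ 0) :
    sig A L y ∈ Ioi (0:ℝ) ∧ Q A L y (sig A L y) = 1 := by
  have hex := exists_root A L hL hLyap hy
  unfold sig
  rw [dif_pos hex]
  exact hex.choose_spec

lemma sig_unique (hL : L.PosDef)
    (hLyap : ∀ x : V, x ≠ 0 → 0 < (inner ℝ (mApply A x) (mApply L x) : ℝ))
    {y : V} (hy : y ≠ 0) {s : ℝ} (hs : s ∈ Ioi (0:ℝ)) (hQ : Q A L y s = 1) :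
    s = sig A L y := by
  have h1 := sig_spec A L hL hLyap hy
  exact (Q_strictMonoOn A L hL hLyap hy).injOn hs h1.1 (hQ.trans h1.2.symm)

lemma contDiffAt_sig (hL : L.PosDef)
    (hLyap : ∀ x : V, x ≠ 0 → 0 < (inner ℝ (mApply A x) (mApply L x) : ℝ))
    {y₀ : V} (hy₀ : y₀ ≠ 0) :
    ContDiffAt ℝ ∞ (sig A L) y₀ := by
  obtain ⟨hs₀pos, hQs₀⟩ := sig_spec A L hL hLyap hy₀
  set s₀ := sig A L y₀ with hs₀def
  have hs₀pos' : (0:ℝ) < s₀ := hs₀pos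
  set p₀ : V × ℝ := (y₀, s₀) with hp₀def
  set G : V × ℝ → V × ℝ := fun p => (p.1, Fq A L p) with hGdef
  have hFq : ContDiffAt ℝ ∞ (Fq A L) p₀ := contDiffAt_Fq A L hs₀pos'.ne'
  have hGc : ContDiffAt ℝ ∞ G p₀ := contDiffAt_fst.prodMk hFq
  have hone : (∞ : WithTop ℕ∞) ≠ 0 := by simp
  have hFd : DifferentiableAt ℝ (Fq A L) p₀ := hFq.differentiableAt hone
  set DF := fderiv ℝ (Fq A L) p₀ with hDFdef
  set T : (V × ℝ) →L[ℝ] (V × ℝ) := (ContinuousLinearMap.fst ℝ V ℝ).prod DF with hTdef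
  have hGd : HasFDerivAt G T p₀ := (hasFDerivAt_fst).prodMk hFd.hasFDerivAt
  have hcurve : HasDerivAt (fun s : ℝ => ((y₀, s) : V × ℝ)) (((0:V), (1:ℝ))) s₀ :=
    (hasDerivAt_const _ _).prodMk (hasDerivAt_id _)
  have hcomp : HasDerivAt (fun s => Fq A L (y₀, s)) (DF ((0:V), (1:ℝ))) s₀ :=
    hFd.hasFDerivAt.comp_hasDerivAt s₀ hcurve
  have hQd : HasDerivAt (fun s => Fq A L (y₀, s))
      (2 * s₀⁻¹ * inner ℝ (toCLM A (cmap A y₀ s₀)) (toCLM L (cmap A y₀ s₀))) s₀ :=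
    hasDerivAt_Q A L hL y₀ hs₀pos'
  have hval : DF ((0:V), (1:ℝ))
      = 2 * s₀⁻¹ * inner ℝ (toCLM A (cmap A y₀ s₀)) (toCLM L (cmap A y₀ s₀)) :=
    hcomp.unique hQd
  have hDFne : DF ((0:V), (1:ℝ)) ≠ 0 := by
    rw [hval]
    have hpos := hLyap (cmap A y₀ s₀) (cmap_ne_zero A hy₀ s₀)
    rw [mApply_eq_toCLM, mApply_eq_toCLM] at hpos
    exact (mul_pos (mul_pos two_pos (inv_pos.2 hs₀pos')) hpos).ne'
  have hinj : Function.Injective T := by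
    intro a b hab
    have h1' : (T a).1 = (T b).1 := congrArg Prod.fst hab
    have h2' : (T a).2 = (T b).2 := congrArg Prod.snd hab
    have h1 : a.1 = b.1 := h1'
    have h2 : DF a = DF b := h2'
    have h4 : DF (a - b) = 0 := by rw [map_sub, h2, sub_self]
    have h5 : a - b = (((0:V), a.2 - b.2) : V × ℝ) := by
      have h5' : a - b = ((a.1 - b.1, a.2 - b.2) : V × ℝ) := rfl
      rw [h5', h1, sub_self]
    have h6 : (((0:V), a.2 - b.2) : V × ℝ) = (a.2 - b.2) • (((0:V), (1:ℝ)) : V × ℝ) := by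
      rw [Prod.smul_mk, smul_zero, smul_eq_mul, mul_one]
    have h7 : (a.2 - b.2) • DF (((0:V), (1:ℝ)) : V × ℝ) = 0 := by
      rw [← _root_.map_smul, ← h6, ← h5, h4]
    have h8 : a.2 - b.2 = 0 := by
      rcases smul_eq_zero.1 h7 with h | h
      · exact h
      · exact absurd h hDFne
    exact Prod.ext h1 (sub_eq_zero.1 h8)
  have hsurj : Function.Surjective T := by
    have h := LinearMap.injective_iff_surjective_of_finrank_eq_finrank
      (f := ((T : (V × ℝ) →L[ℝ] (V × ℝ)) : (V × ℝ) →ₗ[ℝ] (V × ℝ))) rfl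
    exact h.1 hinj
  set CLE := (LinearEquiv.ofBijective ((T : (V × ℝ) →L[ℝ] (V × ℝ)) : (V × ℝ) →ₗ[ℝ] (V × ℝ))
    ⟨hinj, hsurj⟩).toContinuousLinearEquiv with hCLEdef
  have hCLE : (CLE : (V × ℝ) →L[ℝ] (V × ℝ)) = T := by ext x <;> rfl
  have hGd' : HasFDerivAt G ((CLE : (V × ℝ) →L[ℝ] (V × ℝ))) p₀ := by rw [hCLE]; exact hGd
  set ginv := hGc.localInverse hGd' hone with hginvdef
  have hinvC : ContDiffAt ℝ ∞ ginv (G p₀) := hGc.to_localInverse hGd' hone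
  have hGp₀ : G p₀ = ((y₀, (1:ℝ)) : V × ℝ) := by
    show ((p₀.1, Fq A L p₀) : V × ℝ) = (y₀, 1)
    rw [show Fq A L p₀ = 1 from hQs₀]
  have hstrict : HasStrictFDerivAt G ((CLE : (V × ℝ) →L[ℝ] (V × ℝ))) p₀ :=
    hGc.hasStrictFDerivAt' hGd' hone
  have hginv_eq : ginv = hstrict.localInverse G CLE p₀ := rfl
  have happ : ginv ((y₀, (1:ℝ)) : V × ℝ) = p₀ := by
    rw [← hGp₀, hginv_eq]
    exact hstrict.localInverse_apply_image
  rw [hGp₀] at hinvC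
  have hpair : ContDiffAt ℝ ∞ (fun y : V => ((y, (1:ℝ)) : V × ℝ)) y₀ :=
    contDiffAt_id.prodMk contDiffAt_const
  have h1 : ContDiffAt ℝ ∞ (fun y : V => ginv (y, 1)) y₀ := ContDiffAt.comp y₀ hinvC hpair
  have hτ : ContDiffAt ℝ ∞ (fun y : V => (ginv (y, 1)).2) y₀ :=
    (contDiff_snd.contDiffAt).comp y₀ h1
  have hev1 : ∀ᶠ z in 𝓝 (G p₀), G (ginv z) = z := by
    rw [hginv_eq]
    exact hstrict.eventually_right_inverse
  have htend : Tendsto (fun y : V => ((y, (1:ℝ)) : V × ℝ)) (𝓝 y₀) (𝓝 (G p₀)) := by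
    rw [hGp₀]
    exact Continuous.tendsto (continuous_id.prodMk continuous_const) y₀
  have hev1' : ∀ᶠ y in 𝓝 y₀, G (ginv (y, 1)) = ((y, (1:ℝ)) : V × ℝ) := htend.eventually hev1
  have hev2 : ∀ᶠ y in 𝓝 y₀, (ginv (y, 1)).2 ∈ Ioi (0:ℝ) := by
    have hc : ContinuousAt (fun y : V => (ginv (y, 1)).2) y₀ := hτ.continuousAt
    have hval2 : (fun y : V => (ginv (y, 1)).2) y₀ = s₀ := by
      show (ginv ((y₀, (1:ℝ)) : V × ℝ)).2 = s₀
      rw [happ]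
    have hmem : Ioi (0:ℝ) ∈ 𝓝 ((fun y : V => (ginv (y, 1)).2) y₀) := by
      rw [hval2]
      exact Ioi_mem_nhds hs₀pos'
    exact hc.eventually_mem hmem
  have hev3 : ∀ᶠ y in 𝓝 y₀, y ≠ (0:V) := eventually_ne_nhds hy₀
  have heq : (fun y : V => (ginv (y, 1)).2) =ᶠ[𝓝 y₀] sig A L := by
    filter_upwards [hev1', hev2, hev3] with y hy1 hy2 hy3
    have ha : (ginv ((y, (1:ℝ)) : V × ℝ)).1 = y := congrArg Prod.fst hy1
    have hb : Fq A L (ginv ((y, (1:ℝ)) : V × ℝ)) = 1 := congrArg Prod.snd hy1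
    have hQ : Q A L y ((ginv ((y, (1:ℝ)) : V × ℝ)).2) = 1 := by
      have hrw : Fq A L (ginv ((y, (1:ℝ)) : V × ℝ))
          = Q A L ((ginv ((y, (1:ℝ)) : V × ℝ)).1) ((ginv ((y, (1:ℝ)) : V × ℝ)).2) := rfl
      rw [hrw, ha] at hb
      exact hb
    exact sig_unique A L hL hLyap hy3 hy2 hQ
  exact hτ.congr_of_eventuallyEq heq.symm

end IFT

/-- `A`-polar coordinates: `(x̄, t) ↦ t^A x̄` is a diffeomorphism from
`S_L × (0,∞)` onto `ℝⁿ \ {0}`. -/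
theorem polar_decomposition_diffeomorphism {n : ℕ} (A L : Matrix (Fin n) (Fin n) ℝ)
    (hA : PosEigen A) (hL : L.PosDef)
    (hLyap : ∀ x : EuclideanSpace ℝ (Fin n), x ≠ 0 →
      0 < (inner ℝ (mApply A x) (mApply L x) : ℝ)) :
    BijOn (fun p : EuclideanSpace ℝ (Fin n) × ℝ => mApply (texp A p.2) p.1)
      ({x : EuclideanSpace ℝ (Fin n) | (inner ℝ (mApply L x) x : ℝ) = 1} ×ˢ Ioi (0:ℝ))
      {0}ᶜ ∧
    ContDiffOn ℝ (⊤ : ℕ∞) (fun p : EuclideanSpace ℝ (Fin n) × ℝ => mApply (texp A p.2) p.1)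
      ({x : EuclideanSpace ℝ (Fin n) | (inner ℝ (mApply L x) x : ℝ) = 1} ×ˢ Ioi (0:ℝ)) ∧
    ∃ Ψ : EuclideanSpace ℝ (Fin n) → EuclideanSpace ℝ (Fin n) × ℝ,
      ContDiffOn ℝ (⊤ : ℕ∞) Ψ {0}ᶜ ∧
      ∀ y : EuclideanSpace ℝ (Fin n), y ≠ 0 →
        Ψ y ∈ ({x : EuclideanSpace ℝ (Fin n) | (inner ℝ (mApply L x) x : ℝ) = 1} ×ˢ Ioi (0:ℝ)) ∧
        mApply (texp A (Ψ y).2) (Ψ y).1 = y := by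
  have hxne : ∀ x : EuclideanSpace ℝ (Fin n), (inner ℝ (mApply L x) x : ℝ) = 1 → x ≠ 0 := by
    intro x hx h
    rw [h, mApply_eq_toCLM, map_zero] at hx
    simp at hx
  have hmap : (fun p : EuclideanSpace ℝ (Fin n) × ℝ => mApply (texp A p.2) p.1)
      = fun p : EuclideanSpace ℝ (Fin n) × ℝ => Ecl A (Real.log p.2) p.1 :=
    funext fun p => texp_mApply A p.2 p.1
  -- the key uniqueness statement
  have key : ∀ x : EuclideanSpace ℝ (Fin n), ∀ t : ℝ,
      (inner ℝ (mApply L x) x : ℝ) = 1 → 0 < t → ∀ y : EuclideanSpace ℝ (Fin n),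
      Ecl A (Real.log t) x = y → y ≠ 0 → t⁻¹ = sig A L y ∧ x = cmap A y t⁻¹ := by
    intro x t hx ht y hxy hy
    have hc : cmap A y t⁻¹ = x := by
      unfold cmap
      rw [Real.log_inv, ← hxy, Ecl_cancel]
    have hQ : Q A L y t⁻¹ = 1 := by
      unfold Q
      rw [hc]
      rw [mApply_eq_toCLM] at hx
      exact hx
    exact ⟨sig_unique A L hL hLyap hy (mem_Ioi.2 (inv_pos.2 ht)) hQ, hc.symm⟩
  refine ⟨⟨?_, ?_, ?_⟩, ?_, ?_⟩
  · -- MapsTo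
    intro p hp
    have hp1 : (inner ℝ (mApply L p.1) p.1 : ℝ) = 1 := hp.1
    have hp2 : (0:ℝ) < p.2 := hp.2
    show mApply (texp A p.2) p.1 ∈ ({(0: EuclideanSpace ℝ (Fin n))}ᶜ : Set _)
    rw [Set.mem_compl_singleton_iff, texp_mApply]
    exact Ecl_ne_zero A _ (hxne _ hp1)
  · -- InjOn
    intro p hp q hq heq
    have hp1 : (inner ℝ (mApply L p.1) p.1 : ℝ) = 1 := hp.1
    have hp2 : (0:ℝ) < p.2 := hp.2
    have hq1 : (inner ℝ (mApply L q.1) q.1 : ℝ) = 1 := hq.1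
    have hq2 : (0:ℝ) < q.2 := hq.2
    set y := Ecl A (Real.log p.2) p.1 with hydef
    have heq' : Ecl A (Real.log q.2) q.1 = y := by
      have h1 : mApply (texp A p.2) p.1 = mApply (texp A q.2) q.1 := heq
      rw [texp_mApply, texp_mApply] at h1
      exact h1.symm
    have hyne : y ≠ 0 := Ecl_ne_zero A _ (hxne _ hp1)
    obtain ⟨hps, hpx⟩ := key p.1 p.2 hp1 hp2 y rfl hyne
    obtain ⟨hqs, hqx⟩ := key q.1 q.2 hq1 hq2 y heq' hyne
    have ht : p.2 = q.2 := inv_injective (hps.trans hqs.symm)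
    have hx : p.1 = q.1 := by
      rw [hpx, hqx, ht]
    exact Prod.ext hx ht
  · -- SurjOn
    intro y hy
    have hyne : y ≠ 0 := Set.mem_compl_singleton_iff.1 hy
    obtain ⟨hspos, hsQ⟩ := sig_spec A L hL hLyap hyne
    have hspos' : (0:ℝ) < sig A L y := hspos
    refine ⟨(cmap A y (sig A L y), (sig A L y)⁻¹), ⟨?_, ?_⟩, ?_⟩
    · show (inner ℝ (mApply L (cmap A y (sig A L y))) (cmap A y (sig A L y)) : ℝ) = 1
      rw [mApply_eq_toCLM]
      exact hsQ
    · exact mem_Ioi.2 (inv_pos.2 hspos')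
    · show mApply (texp A (sig A L y)⁻¹) (cmap A y (sig A L y)) = y
      rw [texp_mApply, Real.log_inv]
      exact Ecl_cancel A _ y
  · -- smoothness of the forward map
    rw [hmap]
    intro p hp
    have hp2 : (0:ℝ) < p.2 := hp.2
    exact (contDiffAt_cflow A hp2.ne').contDiffWithinAt
  · -- the inverse map
    refine ⟨fun y => (cmap A y (sig A L y), (sig A L y)⁻¹), ?_, ?_⟩
    · intro y hy
      have hyne : y ≠ 0 := Set.mem_compl_singleton_iff.1 hy
      have hsig := contDiffAt_sig A L hL hLyap hyne
      have hsne : sig A L y ≠ 0 := (show (0:ℝ) < sig A L y from (sig_spec A L hL hLyap hyne).1).ne'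
      apply ContDiffAt.contDiffWithinAt
      apply ContDiffAt.prodMk
      · show ContDiffAt ℝ _ (fun z : EuclideanSpace ℝ (Fin n) =>
          Ecl A (Real.log (sig A L z)) z) y
        exact (((contDiff_Ecl A).contDiffAt.comp y
          ((Real.contDiffAt_log.2 hsne).comp y hsig))).clm_apply contDiffAt_id
      · exact hsig.inv hsne
    · intro y hyne
      obtain ⟨hspos, hsQ⟩ := sig_spec A L hL hLyap hyne
      have hspos' : (0:ℝ) < sig A L y := hspos
      refine ⟨⟨?_, ?_⟩, ?_⟩
      · show (inner ℝ (mApply L (cmap A y (sig A L y))) (cmap A y (sig A L y)) : ℝ) = 1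
        rw [mApply_eq_toCLM]
        exact hsQ
      · exact mem_Ioi.2 (inv_pos.2 hspos')
      · show mApply (texp A (sig A L y)⁻¹) (cmap A y (sig A L y)) = y
        rw [texp_mApply, Real.log_inv]
        exact Ecl_cancel A _ y
end
end
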